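/- In the covariant causet with shell sequence (1,2,3,4,5,4,3,2,1) and labels assigned shell-by-shell, the geodesic distance from vertex 1 to vertex 11 is √26, and there are exactly 3 geodesics from 1 to 11, so the curvature K(11) = 2. -/

import Mathlib

/-- The shell function of the covariant causet with shell sequence
`(1,2,3,4,5,4,3,2,1)`, with vertices labeled shell by shell (0-indexed:
vertex `i` here corresponds to the paper's vertex `i+1`). -/
def shell25 (i : Fin 25) : ℕ :=
  if (i : ℕ) < 1 then 0
  else if (i : ℕ) < 3 then 1
  else if (i : ℕ) < 6 then 2
  else if (i : ℕ) < 10 then 3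
  else if (i : ℕ) < 15 then 4
  else if (i : ℕ) < 19 then 5
  else if (i : ℕ) < 22 then 6
  else if (i : ℕ) < 24 then 7
  else 8

/-- `j` is a child of `i`: `j` lies in the shell just after that of `i`. -/
def parent25 (i j : Fin 25) : Prop := shell25 j = shell25 i + 1

/-- A path from `a` to `b`: a parent-child chain starting at `a`, ending at `b`. -/
def IsPath25 (a b : Fin 25) (p : List (Fin 25)) : Prop :=
  p.Chain' parent25 ∧ p.head? = some a ∧ p.getLast? = some b

/-- Path length `(Σ (i_j − i_{j−1})²)^{1/2}` computed from the labels. -/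
noncomputable def len25 (p : List (Fin 25)) : ℝ :=
  Real.sqrt (((p.zip p.tail).map fun q =>
    (((q.2 : ℕ) : ℝ) - ((q.1 : ℕ) : ℝ)) ^ 2).sum)

/-- A geodesic: a path of minimal length between its endpoints. -/
def IsGeo25 (a b : Fin 25) (p : List (Fin 25)) : Prop :=
  IsPath25 a b p ∧ ∀ q : List (Fin 25), IsPath25 a b q → len25 p ≤ len25 q

/-- The geodesic distance from `a` to `b`. -/
noncomputable def dist25 (a b : Fin 25) : ℝ :=
  sInf (len25 '' {p | IsPath25 a b p})

/-!
A path from vertex 1 to vertex 11 meets each of the shells 0, …, 4 exactly once, so there are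
only 2 · 3 · 4 = 24 such paths 1 – a – b – c – 11. Their squared lengths are integers; the least
is 26 and it is attained by exactly three of them.
-/

open Finset

theorem List.IsChain.apply_getLast_of_succ {α : Type*} {f : α → ℕ} :
    ∀ {a : α} {l : List α}, (a :: l).IsChain (fun i j => f j = f i + 1) →
      f ((a :: l).getLast (List.cons_ne_nil a l)) = f a + l.length
  | _, [], _ => rfl
  | _, b :: l, h => by
    rw [List.isChain_cons_cons] at h
    rw [List.getLast_cons (List.cons_ne_nil b l), h.2.apply_getLast_of_succ, h.1,
      List.length_cons]
    ring

theorem IsPath25.shell_add_length {a b : Fin 25} {p : List (Fin 25)} (hp : IsPath25 a b p) :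
    shell25 b + 1 = shell25 a + p.length := by
  obtain ⟨hc, hh, hl⟩ := hp
  obtain ⟨l, rfl⟩ : ∃ l, p = a :: l := by
    cases p with
    | nil => simp at hh
    | cons x l => simp only [List.head?_cons, Option.some.injEq] at hh; exact ⟨l, hh ▸ rfl⟩
  rw [List.getLast?_eq_some_getLast (List.cons_ne_nil a l), Option.some_inj] at hl
  have := List.IsChain.apply_getLast_of_succ (f := shell25) hc
  rw [hl] at this
  simp only [List.length_cons]
  omega

def shellFinset (k : ℕ) : Finset (Fin 25) := univ.filter (shell25 · = k)

def pathsZeroTen : Finset (List (Fin 25)) :=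
  (shellFinset 1 ×ˢ shellFinset 2 ×ˢ shellFinset 3).image fun x => [0, x.1, x.2.1, x.2.2, 10]

theorem isPath25_zero_ten_iff (p : List (Fin 25)) : IsPath25 0 10 p ↔ p ∈ pathsZeroTen := by
  have h0 : shell25 0 = 0 := rfl
  have h10 : shell25 10 = 4 := rfl
  simp only [pathsZeroTen, shellFinset, mem_image, mem_product, mem_filter, mem_univ, true_and,
    Prod.exists]
  constructor
  · intro hp
    have hlen := hp.shell_add_length
    obtain ⟨hc : List.IsChain parent25 _, hh, hl⟩ := hp
    match p, hlen with
    | [x₀, a, b, c, x₄], _ =>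
      obtain rfl : x₀ = 0 := by simpa using hh
      obtain rfl : x₄ = 10 := by simpa using hl
      simp only [List.isChain_cons_cons, List.isChain_singleton, and_true, parent25, h0] at hc
      obtain ⟨ha, hb, hc, -⟩ := hc
      exact ⟨a, b, c, ⟨ha, by omega, by omega⟩, rfl⟩
  · rintro ⟨a, b, c, ⟨ha, hb, hc⟩, rfl⟩
    refine ⟨(?_ : List.IsChain parent25 _), rfl, rfl⟩
    simp only [List.isChain_cons_cons, List.isChain_singleton, and_true, parent25,
      h0, h10, ha, hb, hc]

/-- Computed in `ℤ` so that it can be evaluated by `decide`. -/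
def sqLen25 (p : List (Fin 25)) : ℤ :=
  ((p.zip p.tail).map fun q => ((q.2 : ℕ) - (q.1 : ℕ) : ℤ) ^ 2).sum

theorem len25_eq_sqrt_sqLen25 (p : List (Fin 25)) : len25 p = √(sqLen25 p) := by
  simp [len25, sqLen25, Int.cast_list_sum, List.map_map, Function.comp_def]

theorem sqLen25_nonneg (p : List (Fin 25)) : 0 ≤ sqLen25 p :=
  List.sum_nonneg fun _ hx => by
    obtain ⟨q, -, rfl⟩ := List.mem_map.1 hx
    positivity

theorem len25_le_len25_iff {p q : List (Fin 25)} : len25 p ≤ len25 q ↔ sqLen25 p ≤ sqLen25 q := by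
  rw [len25_eq_sqrt_sqLen25, len25_eq_sqrt_sqLen25,
    Real.sqrt_le_sqrt_iff (by exact_mod_cast sqLen25_nonneg q), Int.cast_le]

theorem IsGeo25.dist25_eq {a b : Fin 25} {p : List (Fin 25)} (hp : IsGeo25 a b p) :
    dist25 a b = len25 p :=
  IsLeast.csInf_eq ⟨⟨p, hp.1, rfl⟩, by rintro _ ⟨q, hq, rfl⟩; exact hp.2 q hq⟩

theorem IsGeo25.isGeo25_iff {a b : Fin 25} {p₀ : List (Fin 25)} (h₀ : IsGeo25 a b p₀)
    (p : List (Fin 25)) : IsGeo25 a b p ↔ IsPath25 a b p ∧ len25 p ≤ len25 p₀ :=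
  ⟨fun hp => ⟨hp.1, hp.2 p₀ h₀.1⟩, fun ⟨hp, hle⟩ => ⟨hp, fun q hq => hle.trans (h₀.2 q hq)⟩⟩

theorem sqLen25_zero_two_five_seven_ten : sqLen25 [0, 2, 5, 7, 10] = 26 := by decide

theorem twentysix_le_sqLen25_of_mem_pathsZeroTen : ∀ p ∈ pathsZeroTen, 26 ≤ sqLen25 p := by
  decide

theorem filter_sqLen25_le_twentysix_pathsZeroTen :
    pathsZeroTen.filter (sqLen25 · ≤ 26) =
      {[0, 2, 5, 7, 10], [0, 2, 4, 7, 10], [0, 2, 5, 8, 10]} := by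
  decide

theorem isGeo25_zero_two_five_seven_ten : IsGeo25 0 10 [0, 2, 5, 7, 10] := by
  refine ⟨(isPath25_zero_ten_iff _).2 (by decide), fun q hq => len25_le_len25_iff.2 ?_⟩
  rw [sqLen25_zero_two_five_seven_ten]
  exact twentysix_le_sqLen25_of_mem_pathsZeroTen q ((isPath25_zero_ten_iff q).1 hq)

theorem isGeo25_zero_ten_iff (p : List (Fin 25)) :
    IsGeo25 0 10 p ↔ p ∈ ({[0, 2, 5, 7, 10], [0, 2, 4, 7, 10], [0, 2, 5, 8, 10]} : Finset _) := by
  rw [isGeo25_zero_two_five_seven_ten.isGeo25_iff, isPath25_zero_ten_iff, len25_le_len25_iff,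
    sqLen25_zero_two_five_seven_ten, ← filter_sqLen25_le_twentysix_pathsZeroTen, mem_filter]

/-- In the causet with shell sequence `(1,2,3,4,5,4,3,2,1)`, the distance from
vertex 1 to vertex 11 (labels `0` and `10` here) is `√26`, the geodesics are
exactly `1–3–6–8–11`, `1–3–5–8–11`, `1–3–6–9–11`, and the curvature
`K(11) = (number of geodesics) − 1 = 2`. -/
theorem dist_and_curvature_vertex11 :
    dist25 0 10 = Real.sqrt 26 ∧
    {p : List (Fin 25) | IsGeo25 0 10 p} =
      {[0, 2, 5, 7, 10], [0, 2, 4, 7, 10], [0, 2, 5, 8, 10]} ∧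
    Nat.card {p : List (Fin 25) // IsGeo25 0 10 p} - 1 = 2 := by
  refine ⟨?_, ?_, ?_⟩
  · rw [isGeo25_zero_two_five_seven_ten.dist25_eq, len25_eq_sqrt_sqLen25,
      sqLen25_zero_two_five_seven_ten, Int.cast_ofNat]
  · ext p
    simpa using isGeo25_zero_ten_iff p
  · rw [Nat.card_congr (Equiv.subtypeEquivRight isGeo25_zero_ten_iff), Nat.card_eq_fintype_card,
      Fintype.card_coe]
    rfl
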